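/- arXiv:1812.06360 — 2 statements merged into one kernel-verified Lean document; each statement's English description precedes it below -/
import Mathlib

section
/- Let N > 1 be a natural number, let a < b be real numbers, and let x : Fin N → ℝ satisfy a ≤ x j ≤ b for all j, with mean μ = (1/N)·∑_{j} x j. Model a sample of size m drawn without replacement by choosing a permutation σ of Fin N uniformly at random and forming the sample mean X̄_m = (1/m)·∑_{t=0}^{m-1} x (σ t). Then for every natural number m with 1 ≤ m ≤ N and every δ ∈ (0,1], the probability of the event X̄_m − μ ≥ −(b − a)·√(ρ_m · log(1/δ) / (2m)) is at least 1 − δ, where ρ_m = min{1 − (m−1)/N, (1 − m/N)(1 + 1/m)}. (This is the lower-tail counterpart, obtained by applying the upper-tail bound to −x.) -/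
/-!
Let `S_k` be the sum of the first `k` draws and `M_k = μ - (Σ x - S_k) / (N - k)` the population
mean minus the mean of the values not yet drawn. Replacing `σ` by `σ * swap k t`, `t ≥ k`, makes
the `(k+1)`-st draw run uniformly over the undrawn values while fixing the first `k`, so
Hoeffding's lemma bounds each increment of `exp (γ M)` averaged over permutations:
`E exp (γ M_K) ≤ exp (γ² (b - a)² / 8 · Σ_{k<K} 1 / (N - k - 1)²)`.
The deviation `μ - X̄_m` is `-(N - m)/m · M_m` (Serfling) and, reading the permutation backwards,
`M_{N-m}` (Bardenet–Maillard). Comparing with telescoping sums bounds the two variance sums by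
the two branches of the minimum defining `ρ_m`, divided by `m`; Chernoff's bound concludes.
-/

open Real Finset
open scoped Nat

/-- Hoeffding's lemma for the uniform distribution on `s`. -/
theorem Finset.sum_exp_mul_le_of_sum_eq_zero {ι : Type*} (s : Finset ι) (hs : s.Nonempty)
    (v : ι → ℝ) {α β : ℝ} (hv : ∀ i ∈ s, v i ∈ Set.Icc α β) (h0 : ∑ i ∈ s, v i = 0)
    (t : ℝ) :
    ∑ i ∈ s, exp (t * v i) ≤ #s * exp (t ^ 2 * (β - α) ^ 2 / 8) := by
  let _ : MeasurableSpace s := ⊤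
  have : Nonempty s := hs.to_subtype
  set μ := (PMF.uniformOfFintype s).toMeasure
  have hint (f : s → ℝ) : ∫ i, f i ∂μ = (#s : ℝ)⁻¹ * ∑ i, f i := by
    simp [μ, PMF.integral_eq_sum, Finset.mul_sum]
  have hmgf := (ProbabilityTheory.hasSubgaussianMGF_of_mem_Icc_of_integral_eq_zero
    (X := fun i : s => v i) (μ := μ) (a := α) (b := β) (measurable_of_countable _).aemeasurable
    (.of_forall fun i => hv i i.2) (by rw [hint, Finset.sum_coe_sort s v, h0, mul_zero])).mgf_le t
  rw [ProbabilityTheory.mgf, hint, Finset.sum_coe_sort s (fun i => exp (t * v i))] at hmgf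
  have hcard : (0 : ℝ) < #s := by exact_mod_cast hs.card_pos
  rw [inv_mul_le_iff₀ hcard] at hmgf
  refine hmgf.trans_eq ?_
  rw [NNReal.coe_pow, NNReal.coe_div, coe_nnnorm, Real.norm_eq_abs, NNReal.coe_ofNat, div_pow,
    sq_abs]
  congr 2
  ring

theorem Fintype.sum_sum_mul_right {G M ι : Type*} [Group G] [Fintype G] [AddCommMonoid M]
    (s : Finset ι) (g : ι → G) (f : G → M) :
    ∑ σ, ∑ i ∈ s, f (σ * g i) = #s • ∑ σ, f σ := by
  rw [Finset.sum_comm, ← Finset.sum_const]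
  exact Finset.sum_congr rfl fun i _ => Fintype.sum_equiv (Equiv.mulRight (g i)) _ _ fun _ => rfl

theorem Finset.sum_range_one_div_sub_one_sq_le {N K : ℕ} (hK : K < N) :
    ∑ k ∈ range K, 1 / ((N : ℝ) - k - 1) ^ 2
      ≤ (1 + 1 / ((N : ℝ) - K)) * (1 / ((N : ℝ) - K) - 1 / N) := by
  have hKN : (K : ℝ) + 1 ≤ N := by exact_mod_cast hK
  calc ∑ k ∈ range K, 1 / ((N : ℝ) - k - 1) ^ 2
      ≤ ∑ k ∈ range K,
          (1 + 1 / ((N : ℝ) - K)) * (1 / ((N : ℝ) - (k + 1 : ℕ)) - 1 / ((N : ℝ) - k)) := by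
        refine sum_le_sum fun k hk => ?_
        have hkK : (k : ℝ) + 1 ≤ K := by exact_mod_cast mem_range.1 hk
        have hd : (N : ℝ) - K ≤ N - k - 1 := by linarith
        have hd0 : (0 : ℝ) < N - K := by linarith
        have hd1 : (0 : ℝ) < N - k - 1 := by linarith
        have hd2 : (0 : ℝ) < N - k := by linarith
        have htel : 1 / ((N : ℝ) - (k + 1 : ℕ)) - 1 / ((N : ℝ) - k)
            = 1 / (((N : ℝ) - k - 1) * (N - k)) := by
          rw [Nat.cast_succ, ← sub_sub]
          field_simp [hd1.ne', hd2.ne']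
          ring
        calc 1 / ((N : ℝ) - k - 1) ^ 2
            = (1 + 1 / ((N : ℝ) - k - 1)) * (1 / (((N : ℝ) - k - 1) * (N - k))) := by
              field_simp [hd1.ne', hd2.ne']
              ring
          _ ≤ _ := by
              rw [htel]
              gcongr
    _ = (1 + 1 / ((N : ℝ) - K)) * (1 / ((N : ℝ) - K) - 1 / N) := by
        rw [← mul_sum, sum_range_sub (fun k : ℕ => 1 / ((N : ℝ) - k)), Nat.cast_zero,
          sub_zero]

theorem Fintype.card_filter_le_of_sum_exp_mul_le {α : Type*} [Fintype α] (Y : α → ℝ)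
    {n c ε : ℝ} (hc : 0 < c) (hε : 0 ≤ ε)
    (h : ∀ lam, 0 ≤ lam → ∑ i, exp (lam * Y i) ≤ n * exp (lam ^ 2 * c / 2)) :
    (#{i | ε ≤ Y i} : ℝ) ≤ n * exp (-(ε ^ 2 / (2 * c))) := by
  set lam := ε / c
  have hlam : 0 ≤ lam := by positivity
  have hmarkov : (#{i | ε ≤ Y i} : ℝ) * exp (lam * ε) ≤ ∑ i, exp (lam * Y i) :=
    calc (#{i | ε ≤ Y i} : ℝ) * exp (lam * ε) = ∑ i with ε ≤ Y i, exp (lam * ε) := by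
          rw [sum_const, nsmul_eq_mul]
      _ ≤ ∑ i with ε ≤ Y i, exp (lam * Y i) :=
          sum_le_sum fun i hi => by gcongr; exact (mem_filter.1 hi).2
      _ ≤ ∑ i, exp (lam * Y i) :=
          sum_le_sum_of_subset_of_nonneg (filter_subset _ _) fun _ _ _ => (exp_pos _).le
  have hexp : -(ε ^ 2 / (2 * c)) = lam ^ 2 * c / 2 - lam * ε := by
    simp only [lam]
    field_simp
    ring
  rw [hexp, exp_sub, mul_div_assoc', le_div_iff₀ (exp_pos _)]
  exact hmarkov.trans (h lam hlam)

theorem Fintype.one_sub_le_card_subtype_div {α : Type*} [Fintype α] [Nonempty α]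
    (p : α → Prop) [DecidablePred p] {δ : ℝ} (h : (#{a | ¬ p a} : ℝ) ≤ δ * Fintype.card α) :
    1 - δ ≤ Nat.card {a // p a} / Nat.card α := by
  have hα : (0 : ℝ) < Fintype.card α := by exact_mod_cast Fintype.card_pos
  have hsplit : (#{a | p a} : ℝ) + #{a | ¬ p a} = Fintype.card α := by
    exact_mod_cast card_filter_add_card_filter_not p
  rw [Nat.card_eq_fintype_card, Nat.card_eq_fintype_card, Fintype.card_subtype, le_div_iff₀ hα]
  linarith

namespace SamplingWithoutReplacement

open Equiv

variable {N : ℕ} (x : Fin N → ℝ)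

noncomputable def mean : ℝ := (∑ j, x j) / N

noncomputable def partialSum (k : ℕ) (σ : Perm (Fin N)) : ℝ :=
  ∑ t ∈ univ.filter (fun t : Fin N => (t : ℕ) < k), x (σ t)

noncomputable def sampleMean (m : ℕ) (σ : Perm (Fin N)) : ℝ := partialSum x m σ / m

noncomputable def remainingMean (k : ℕ) (σ : Perm (Fin N)) : ℝ :=
  (∑ j, x j - partialSum x k σ) / (N - k)

noncomputable def martingale (k : ℕ) (σ : Perm (Fin N)) : ℝ := mean x - remainingMean x k σ

noncomputable def rho (N m : ℕ) : ℝ :=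
  min (1 - ((m : ℝ) - 1) / N) ((1 - (m : ℝ) / N) * (1 + 1 / (m : ℝ)))

theorem partialSum_of_le {k : ℕ} (hk : N ≤ k) (σ : Perm (Fin N)) :
    partialSum x k σ = ∑ j, x j := by
  rw [partialSum, filter_true_of_mem fun t _ => t.2.trans_le hk]
  exact Equiv.sum_comp σ x

theorem sum_filter_not_lt (k : ℕ) (σ : Perm (Fin N)) :
    ∑ t ∈ univ.filter (fun t : Fin N => ¬ (t : ℕ) < k), x (σ t)
      = ∑ j, x j - partialSum x k σ := by
  rw [eq_sub_iff_add_eq', partialSum, sum_filter_add_sum_filter_not]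
  exact Equiv.sum_comp σ x

theorem partialSum_succ (k : Fin N) (σ : Perm (Fin N)) :
    partialSum x (k + 1) σ = partialSum x k σ + x (σ k) := by
  have : univ.filter (fun t : Fin N => (t : ℕ) < k + 1)
      = insert k (univ.filter (fun t : Fin N => (t : ℕ) < k)) := by
    ext t
    simp only [mem_filter, mem_univ, true_and, mem_insert, Fin.ext_iff]
    omega
  rw [partialSum, this, sum_insert (by simp), add_comm, partialSum]

theorem partialSum_mul_swap {k : ℕ} {i j : Fin N} (hi : k ≤ i) (hj : k ≤ j)
    (σ : Perm (Fin N)) : partialSum x k (σ * swap i j) = partialSum x k σ := by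
  refine sum_congr rfl fun t ht => ?_
  have ht : (t : ℕ) < k := (mem_filter.1 ht).2
  rw [Perm.mul_apply, swap_apply_of_ne_of_ne (by omega) (by omega)]

theorem partialSum_mul_revPerm {m : ℕ} (hm : m ≤ N) (σ : Perm (Fin N)) :
    partialSum x m (σ * Fin.revPerm) = ∑ j, x j - partialSum x (N - m) σ := by
  rw [← sum_filter_not_lt]
  refine sum_equiv Fin.revPerm (fun t => ?_) fun _ _ => rfl
  simp only [mem_filter, mem_univ, true_and, Fin.revPerm_apply, Fin.val_rev]
  omega

theorem martingale_zero (hN : 0 < N) (σ : Perm (Fin N)) : martingale x 0 σ = 0 := by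
  have hN : (N : ℝ) ≠ 0 := by positivity
  simp [martingale, remainingMean, mean, partialSum]

theorem martingale_succ_mul_swap {k t : Fin N} (hk : (k : ℕ) + 1 < N) (ht : k ≤ t)
    (σ : Perm (Fin N)) :
    martingale x (k + 1) (σ * swap k t)
      = martingale x k σ + (x (σ t) - remainingMean x k σ) / (N - k - 1) := by
  have hk' : ((k : ℕ) : ℝ) + 1 < N := by exact_mod_cast hk
  have h1 : (N : ℝ) - k - 1 ≠ 0 := by linarith
  have h2 : (N : ℝ) - k ≠ 0 := by linarith
  rw [martingale, martingale, remainingMean, remainingMean, partialSum_succ,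
    partialSum_mul_swap x le_rfl ht, Perm.mul_apply, swap_apply_left,
    show (N : ℝ) - ((k + 1 : ℕ) : ℝ) = N - k - 1 by push_cast; ring]
  field_simp
  ring

variable {x} {a b : ℝ}

theorem sum_Ici_exp_mul_sub_remainingMean_le (hx : ∀ j, x j ∈ Set.Icc a b) (c : ℝ) (k : Fin N)
    (σ : Perm (Fin N)) :
    ∑ t ∈ Ici k, exp (c * (x (σ t) - remainingMean x k σ))
      ≤ #(Ici k) * exp (c ^ 2 * (b - a) ^ 2 / 8) := by
  have hNk : (N : ℝ) - k ≠ 0 := sub_ne_zero.2 (ne_of_gt (by exact_mod_cast k.2))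
  have hIci : Ici k = univ.filter (fun t : Fin N => ¬ (t : ℕ) < k) := by
    ext t
    simp only [mem_Ici, mem_filter, mem_univ, true_and, Fin.le_def, not_lt]
  have hrange (t : Fin N) (_ : t ∈ Ici k) : x (σ t) - remainingMean x k σ
      ∈ Set.Icc (a - remainingMean x k σ) (b - remainingMean x k σ) :=
    ⟨by linarith [(hx (σ t)).1], by linarith [(hx (σ t)).2]⟩
  have hcenter : ∑ t ∈ Ici k, (x (σ t) - remainingMean x k σ) = 0 := by
    rw [sum_sub_distrib, sum_const, nsmul_eq_mul, Fin.card_Ici, Nat.cast_sub k.2.le, hIci,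
      sum_filter_not_lt, remainingMean]
    field_simp
    ring
  simpa using sum_exp_mul_le_of_sum_eq_zero _ ⟨k, mem_Ici.2 le_rfl⟩ _ hrange hcenter c

theorem sum_exp_martingale_succ_le (hx : ∀ j, x j ∈ Set.Icc a b) (γ : ℝ) (k : Fin N)
    (hk : (k : ℕ) + 1 < N) :
    ∑ σ, exp (γ * martingale x (k + 1) σ)
      ≤ exp (γ ^ 2 * (b - a) ^ 2 / 8 / ((N : ℝ) - k - 1) ^ 2)
        * ∑ σ, exp (γ * martingale x k σ) := by
  have hcard : (0 : ℝ) < #(Ici k) := by exact_mod_cast card_pos.2 ⟨k, mem_Ici.2 le_rfl⟩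
  set c : ℝ := γ / ((N : ℝ) - k - 1)
  have hc : c ^ 2 * (b - a) ^ 2 / 8 = γ ^ 2 * (b - a) ^ 2 / 8 / ((N : ℝ) - k - 1) ^ 2 := by
    rw [div_pow]
    ring
  refine le_of_mul_le_mul_left ?_ hcard
  calc (#(Ici k) : ℝ) * ∑ σ, exp (γ * martingale x (k + 1) σ)
      = ∑ σ, ∑ t ∈ Ici k, exp (γ * martingale x (k + 1) (σ * swap k t)) := by
        rw [Fintype.sum_sum_mul_right (Ici k) (swap k)
          fun σ => exp (γ * martingale x (k + 1) σ), nsmul_eq_mul]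
    _ = ∑ σ, exp (γ * martingale x k σ)
          * ∑ t ∈ Ici k, exp (c * (x (σ t) - remainingMean x k σ)) := by
        refine sum_congr rfl fun σ _ => ?_
        rw [mul_sum]
        refine sum_congr rfl fun t ht => ?_
        rw [martingale_succ_mul_swap x hk (mem_Ici.1 ht), ← exp_add]
        congr 1
        ring
    _ ≤ ∑ σ, exp (γ * martingale x k σ)
          * (#(Ici k) * exp (c ^ 2 * (b - a) ^ 2 / 8)) :=
        sum_le_sum fun σ _ => by gcongr; exact sum_Ici_exp_mul_sub_remainingMean_le hx c k σ
    _ = _ := by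
        rw [← sum_mul, hc]
        ring

theorem sum_exp_martingale_le (hx : ∀ j, x j ∈ Set.Icc a b) (γ : ℝ) {K : ℕ} (hK : K < N) :
    ∑ σ, exp (γ * martingale x K σ)
      ≤ N ! * exp
        (γ ^ 2 * (b - a) ^ 2 / 8 * ∑ k ∈ range K, 1 / ((N : ℝ) - k - 1) ^ 2) := by
  induction K with
  | zero => simp [martingale_zero x hK, Fintype.card_perm]
  | succ K ih =>
    calc ∑ σ, exp (γ * martingale x (K + 1) σ)
        ≤ exp (γ ^ 2 * (b - a) ^ 2 / 8 / ((N : ℝ) - K - 1) ^ 2)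
          * ∑ σ, exp (γ * martingale x K σ) :=
          sum_exp_martingale_succ_le hx γ ⟨K, by omega⟩ hK
      _ ≤ exp (γ ^ 2 * (b - a) ^ 2 / 8 / ((N : ℝ) - K - 1) ^ 2)
          * (N ! * exp
            (γ ^ 2 * (b - a) ^ 2 / 8 * ∑ k ∈ range K, 1 / ((N : ℝ) - k - 1) ^ 2)) := by
          gcongr
          exact ih (by omega)
      _ = _ := by
          rw [sum_range_succ, mul_add, exp_add, mul_one_div]
          ring

theorem sum_exp_mean_sub_sampleMean_le_serfling (hx : ∀ j, x j ∈ Set.Icc a b) (lam : ℝ)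
    {m : ℕ} (hm : 1 ≤ m) (hmN : m < N) :
    ∑ σ, exp (lam * (mean x - sampleMean x m σ))
      ≤ N ! * exp (lam ^ 2 * (b - a) ^ 2 / 8 * ((1 - ((m : ℝ) - 1) / N) / m)) := by
  have hm0 : (0 : ℝ) < m := by exact_mod_cast hm
  have hmN' : (m : ℝ) < N := by exact_mod_cast hmN
  have hNm : (N : ℝ) - m ≠ 0 := by linarith
  have hN0 : (N : ℝ) ≠ 0 := by linarith
  set γ : ℝ := -(lam * (N - m) / m)
  have hmart (σ : Perm (Fin N)) :
      lam * (mean x - sampleMean x m σ) = γ * martingale x m σ := by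
    simp only [γ, martingale, remainingMean, sampleMean, mean]
    field_simp
    ring
  simp_rw [hmart]
  refine (sum_exp_martingale_le hx γ hmN).trans ?_
  gcongr N ! * exp ?_
  calc γ ^ 2 * (b - a) ^ 2 / 8 * ∑ k ∈ range m, 1 / ((N : ℝ) - k - 1) ^ 2
      ≤ γ ^ 2 * (b - a) ^ 2 / 8
          * ((1 + 1 / ((N : ℝ) - m)) * (1 / ((N : ℝ) - m) - 1 / N)) := by
        gcongr
        exact sum_range_one_div_sub_one_sq_le hmN
    _ = lam ^ 2 * (b - a) ^ 2 / 8 * ((1 - ((m : ℝ) - 1) / N) / m) := by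
        simp only [γ]
        field_simp
        ring

theorem sum_exp_mean_sub_sampleMean_le_reversed (hx : ∀ j, x j ∈ Set.Icc a b) (lam : ℝ)
    {m : ℕ} (hm : 1 ≤ m) (hmN : m ≤ N) :
    ∑ σ, exp (lam * (mean x - sampleMean x m σ))
      ≤ N ! * exp
        (lam ^ 2 * (b - a) ^ 2 / 8 * ((1 - (m : ℝ) / N) * (1 + 1 / (m : ℝ)) / m)) := by
  have hm0 : (0 : ℝ) < m := by exact_mod_cast hm
  have hN0 : (0 : ℝ) < N := by exact_mod_cast hm.trans hmN
  have hmart (σ : Perm (Fin N)) :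
      mean x - sampleMean x m (σ * Fin.revPerm) = martingale x (N - m) σ := by
    rw [sampleMean, partialSum_mul_revPerm x hmN, martingale, remainingMean, Nat.cast_sub hmN,
      sub_sub_cancel]
  rw [← Equiv.sum_comp (Equiv.mulRight Fin.revPerm)]
  simp_rw [Equiv.coe_mulRight, hmart]
  refine (sum_exp_martingale_le hx lam (by omega : N - m < N)).trans ?_
  gcongr N ! * exp ?_
  calc lam ^ 2 * (b - a) ^ 2 / 8 * ∑ k ∈ range (N - m), 1 / ((N : ℝ) - k - 1) ^ 2
      ≤ lam ^ 2 * (b - a) ^ 2 / 8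
          * ((1 + 1 / ((N : ℝ) - (N - m : ℕ)))
            * (1 / ((N : ℝ) - (N - m : ℕ)) - 1 / N)) := by
        gcongr
        exact sum_range_one_div_sub_one_sq_le (by omega)
    _ = lam ^ 2 * (b - a) ^ 2 / 8 * ((1 - (m : ℝ) / N) * (1 + 1 / (m : ℝ)) / m) := by
        rw [Nat.cast_sub hmN, sub_sub_cancel]
        field_simp

theorem sum_exp_mean_sub_sampleMean_le (hx : ∀ j, x j ∈ Set.Icc a b) (lam : ℝ) {m : ℕ}
    (hm : 1 ≤ m) (hmN : m < N) :
    ∑ σ, exp (lam * (mean x - sampleMean x m σ))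
      ≤ N ! * exp (lam ^ 2 * ((b - a) ^ 2 * rho N m / (4 * m)) / 2) := by
  rw [show lam ^ 2 * ((b - a) ^ 2 * rho N m / (4 * m)) / 2
      = lam ^ 2 * (b - a) ^ 2 / 8 * (rho N m / m) by ring, rho]
  rcases min_choice (1 - ((m : ℝ) - 1) / N) ((1 - (m : ℝ) / N) * (1 + 1 / (m : ℝ))) with h | h
  · rw [h]
    exact sum_exp_mean_sub_sampleMean_le_serfling hx lam hm hmN
  · rw [h]
    exact sum_exp_mean_sub_sampleMean_le_reversed hx lam hm hmN.le

theorem card_mean_sub_sampleMean_ge_le (hx : ∀ j, x j ∈ Set.Icc a b) (hab : a < b) {m : ℕ}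
    (hm : 1 ≤ m) (hmN : m < N) {δ : ℝ} (hδ0 : 0 < δ) (hδ1 : δ ≤ 1) :
    (#{σ | (b - a) * sqrt (rho N m * log (1 / δ) / (2 * m))
        ≤ mean x - sampleMean x m σ} : ℝ) ≤ δ * N ! := by
  have hm0 : (0 : ℝ) < m := by exact_mod_cast hm
  have hmN' : (m : ℝ) < N := by exact_mod_cast hmN
  have hba : 0 < b - a := sub_pos.2 hab
  have hρ : 0 < rho N m := lt_min (by rw [sub_pos, div_lt_one (by linarith)]; linarith)
    (mul_pos (by rw [sub_pos, div_lt_one (by linarith)]; linarith) (by positivity))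
  have hL : 0 ≤ log (1 / δ) := log_nonneg (by rw [le_div_iff₀ hδ0]; linarith)
  set c := (b - a) ^ 2 * rho N m / (4 * m)
  have hexp : (b - a) ^ 2 * (rho N m * log (1 / δ) / (2 * m)) / (2 * c)
      = log (1 / δ) := by
    simp only [c]
    field_simp
    ring
  have hδ : exp (-log (1 / δ)) = δ := by
    rw [one_div, log_inv, neg_neg, exp_log hδ0]
  have htail := Fintype.card_filter_le_of_sum_exp_mul_le _ (by positivity)
    (ε := (b - a) * sqrt (rho N m * log (1 / δ) / (2 * m))) (by positivity)
    fun lam _ => sum_exp_mean_sub_sampleMean_le hx lam hm hmN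
  rw [mul_pow, sq_sqrt (by positivity), hexp, hδ] at htail
  exact htail.trans_eq (mul_comm _ _)

end SamplingWithoutReplacement

open SamplingWithoutReplacement

theorem stmt1_general (N : ℕ) (a b : ℝ) (hab : a < b)
    (x : Fin N → ℝ) (hx : ∀ j, a ≤ x j ∧ x j ≤ b)
    (m : ℕ) (hm1 : 1 ≤ m) (hmN : m ≤ N)
    (δ : ℝ) (hδ0 : 0 < δ) (hδ1 : δ ≤ 1) :
    1 - δ ≤
      (Nat.card {σ : Equiv.Perm (Fin N) //
          -((b - a) * Real.sqrt
              ((min (1 - ((m : ℝ) - 1) / N) ((1 - (m : ℝ) / N) * (1 + 1 / (m : ℝ)))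
                * Real.log (1 / δ)) / (2 * m)))
            ≤ (1 / (m : ℝ)) * (∑ t ∈ Finset.univ.filter (fun t : Fin N => (t : ℕ) < m), x (σ t))
              - (1 / (N : ℝ)) * ∑ j, x j} : ℝ)
        / (Nat.card (Equiv.Perm (Fin N)) : ℝ) := by
  classical
  refine Fintype.one_sub_le_card_subtype_div _ ?_
  rw [Fintype.card_perm, Fintype.card_fin]
  rcases hmN.eq_or_lt with rfl | hmN
  · have hsample (σ : Equiv.Perm (Fin m)) :
        ∑ t ∈ univ.filter (fun t : Fin m => (t : ℕ) < m), x (σ t) = ∑ j, x j :=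
      partialSum_of_le x le_rfl σ
    have hε : 0 ≤ (b - a) * sqrt (rho m m * log (1 / δ) / (2 * m)) :=
      mul_nonneg (by linarith) (sqrt_nonneg _)
    rw [filter_false_of_mem fun σ _ =>
      not_not.2 (by rw [hsample, sub_self, neg_nonpos]; exact hε), card_empty, Nat.cast_zero]
    positivity
  refine le_trans ?_ (card_mean_sub_sampleMean_ge_le hx hab hm1 hmN hδ0 hδ1)
  gcongr with σ
  intro hσ
  have hdev : mean x - sampleMean x m σ
      = -((1 / (m : ℝ)) * partialSum x m σ - (1 / (N : ℝ)) * ∑ j, x j) := by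
    rw [mean, sampleMean]
    ring
  rw [hdev, rho]
  exact le_neg.2 (not_le.1 hσ).le

/-- Lower-tail counterpart of the without-replacement concentration bound:
`X̄_m − μ ≥ −(b − a)·√(ρ_m · log(1/δ) / (2m))` with probability at least `1 − δ`. -/
theorem stmt1 (N : ℕ) (hN : 1 < N) (a b : ℝ) (hab : a < b)
    (x : Fin N → ℝ) (hx : ∀ j, a ≤ x j ∧ x j ≤ b)
    (m : ℕ) (hm1 : 1 ≤ m) (hmN : m ≤ N)
    (δ : ℝ) (hδ0 : 0 < δ) (hδ1 : δ ≤ 1) :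
    1 - δ ≤
      (Nat.card {σ : Equiv.Perm (Fin N) //
          -((b - a) * Real.sqrt
              ((min (1 - ((m : ℝ) - 1) / N) ((1 - (m : ℝ) / N) * (1 + 1 / (m : ℝ)))
                * Real.log (1 / δ)) / (2 * m)))
            ≤ (1 / (m : ℝ)) * (∑ t ∈ Finset.univ.filter (fun t : Fin N => (t : ℕ) < m), x (σ t))
              - (1 / (N : ℝ)) * ∑ j, x j} : ℝ)
        / (Nat.card (Equiv.Perm (Fin N)) : ℝ) :=
  stmt1_general N a b hab x hx m hm1 hmN δ hδ0 hδ1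
end

section
/- Let N be a natural number with N > 1 and let u > 0 be a real number. For every natural number m with 1 ≤ m < N, if m ≥ min{(u + 1)/(1 + u/N), (u + u/N)/(1 + u/N)}, then m / ρ_m ≥ u, where ρ_m = min{1 − (m − 1)/N, (1 − m/N)(1 + 1/m)}. -/
/-!
Clearing denominators, the two thresholds become `u (N - m) ≤ N (m - 1)` and
`u (N - m + 1) ≤ m N`. Since `ρ₁ = (N - m + 1) / N` and `ρ₂ = (N - m)(m + 1) / (N m)`, the second
is exactly `u ρ₁ ≤ m`, and the first gives `u ρ₂ ≤ (m - 1)(m + 1) / m ≤ m`. Whichever threshold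
holds, `m / ρᵢ ≥ u` for the corresponding `i`, and `m / min ρ₁ ρ₂ ≥ m / ρᵢ`.
-/

section SampleSize

variable {N m u : ℝ}

lemma mul_sub_le_of_add_one_div_le (hN : 0 < N) (hu : 0 < u)
    (h : (u + 1) / (1 + u / N) ≤ m) : u * (N - m) ≤ N * (m - 1) := by
  rw [div_le_iff₀ (by positivity)] at h
  field_simp at h
  linarith

lemma mul_sub_add_one_le_of_add_div_le (hN : 0 < N) (hu : 0 < u)
    (h : (u + u / N) / (1 + u / N) ≤ m) : u * (N - m + 1) ≤ m * N := by
  rw [div_le_iff₀ (by positivity)] at h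
  field_simp at h
  linarith

lemma one_sub_sub_one_div_pos (hN : 0 < N) (hmN : m < N + 1) : 0 < 1 - (m - 1) / N := by
  rw [sub_pos, div_lt_one hN]
  linarith

lemma one_sub_div_mul_one_add_inv_pos (hm : 0 < m) (hmN : m < N) :
    0 < (1 - m / N) * (1 + 1 / m) := by
  have hN : 0 < N := hm.trans hmN
  have : 0 < 1 - m / N := by rw [sub_pos, div_lt_one hN]; exact hmN
  positivity

lemma le_div_one_sub_sub_one_div (hN : 0 < N) (hmN : m < N + 1) (hu : 0 < u)
    (h : (u + u / N) / (1 + u / N) ≤ m) : u ≤ m / (1 - (m - 1) / N) := by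
  have key := mul_sub_add_one_le_of_add_div_le hN hu h
  have hρ : 1 - (m - 1) / N = (N - m + 1) / N := by field_simp; ring
  rw [hρ, le_div_iff₀ (by rw [← hρ]; exact one_sub_sub_one_div_pos hN hmN)]
  calc u * ((N - m + 1) / N) = u * (N - m + 1) / N := by ring
    _ ≤ m * N / N := by gcongr
    _ = m := by field_simp

lemma le_div_one_sub_div_mul_one_add_inv (hm : 0 < m) (hmN : m < N) (hu : 0 < u)
    (h : (u + 1) / (1 + u / N) ≤ m) : u ≤ m / ((1 - m / N) * (1 + 1 / m)) := by
  have hN : 0 < N := hm.trans hmN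
  have key := mul_sub_le_of_add_one_div_le hN hu h
  have hρ : (1 - m / N) * (1 + 1 / m) = (N - m) * (m + 1) / (N * m) := by field_simp
  rw [le_div_iff₀ (one_sub_div_mul_one_add_inv_pos hm hmN), hρ]
  calc u * ((N - m) * (m + 1) / (N * m)) = u * (N - m) * (m + 1) / (N * m) := by ring
    _ ≤ N * (m - 1) * (m + 1) / (N * m) := by gcongr
    _ ≤ N * m * m / (N * m) := div_le_div_of_nonneg_right (by nlinarith) (by positivity)
    _ = m := by field_simp

end SampleSize

theorem stmt6_general (N : ℕ) (u : ℝ) (hu : 0 < u)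
    (m : ℕ) (hm1 : 1 ≤ m) (hmN : m < N)
    (h : min ((u + 1) / (1 + u / (N : ℝ))) ((u + u / (N : ℝ)) / (1 + u / (N : ℝ))) ≤ (m : ℝ)) :
    u ≤ (m : ℝ) /
      min (1 - ((m : ℝ) - 1) / N) ((1 - (m : ℝ) / N) * (1 + 1 / (m : ℝ))) := by
  have hm : (0 : ℝ) < m := by exact_mod_cast hm1
  have hmN' : (m : ℝ) < N := by exact_mod_cast hmN
  have hN : (0 : ℝ) < N := hm.trans hmN'
  have hρ₁ := one_sub_sub_one_div_pos hN (by linarith : (m : ℝ) < N + 1)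
  have hρ₂ := one_sub_div_mul_one_add_inv_pos hm hmN'
  rcases min_le_iff.mp h with h₁ | h₂
  · calc u ≤ m / ((1 - (m : ℝ) / N) * (1 + 1 / (m : ℝ))) :=
          le_div_one_sub_div_mul_one_add_inv hm hmN' hu h₁
      _ ≤ _ := div_le_div_of_nonneg_left hm.le (lt_min hρ₁ hρ₂) (min_le_right _ _)
  · calc u ≤ m / (1 - ((m : ℝ) - 1) / N) :=
          le_div_one_sub_sub_one_div hN (by linarith) hu h₂
      _ ≤ _ := div_le_div_of_nonneg_left hm.le (lt_min hρ₁ hρ₂) (min_le_left _ _)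

/-- Combining both branches: for integers `1 ≤ m < N`, if
`m ≥ min{(u+1)/(1+u/N), (u+u/N)/(1+u/N)}` then `m/ρ_m ≥ u`, where
`ρ_m = min{1 − (m−1)/N, (1 − m/N)(1 + 1/m)}`. -/
theorem stmt6 (N : ℕ) (hN : 1 < N) (u : ℝ) (hu : 0 < u)
    (m : ℕ) (hm1 : 1 ≤ m) (hmN : m < N)
    (h : min ((u + 1) / (1 + u / (N : ℝ))) ((u + u / (N : ℝ)) / (1 + u / (N : ℝ))) ≤ (m : ℝ)) :
    u ≤ (m : ℝ) /
      min (1 - ((m : ℝ) - 1) / N) ((1 - (m : ℝ) / N) * (1 + 1 / (m : ℝ))) :=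
  stmt6_general N u hu m hm1 hmN h
end
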